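/- arXiv:1510.00238 — 7 statements merged into one kernel-verified Lean document; each statement's English description precedes it below -/
import Mathlib

section
/- Let n ≥ 1. The set S_n of n-tuples ξ = (ξ_0, …, ξ_{n−1}) of continuous weakly increasing surjections [0,1] → [0,1] satisfying (1/n)·Σ_{i<n} ξ_i = id_{[0,1]} is compact in the product of the uniform (sup-metric) topologies. -/
open unitInterval
open scoped NNReal

/-- The set of `n`-Lipschitz continuous self-maps of the unit interval is compact. -/
lemma lipK_compact (c : ℝ≥0) :
    IsCompact {f : C(unitInterval, unitInterval) | LipschitzWith c f} := by
  apply ArzelaAscoli.isCompact_of_equicontinuous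
  · -- compact in pointwise topology
    have hcl : IsClosed (ContinuousMap.toFun ''
        {f : C(unitInterval, unitInterval) | LipschitzWith c f}) := by
      have : ContinuousMap.toFun '' {f : C(unitInterval, unitInterval) | LipschitzWith c f}
          = {g : unitInterval → unitInterval | LipschitzWith c g} := by
        ext g
        constructor
        · rintro ⟨f, hf, rfl⟩; exact hf
        · intro hg; exact ⟨⟨g, hg.continuous⟩, hg, rfl⟩
      rw [this]
      have : {g : unitInterval → unitInterval | LipschitzWith c g} =
          ⋂ (x : unitInterval), ⋂ (y : unitInterval),
            {g : unitInterval → unitInterval | dist (g x) (g y) ≤ c * dist x y} := by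
        ext g
        simp only [Set.mem_setOf_eq, Set.mem_iInter]
        constructor
        · intro h x y; exact h.dist_le_mul x y
        · intro h; exact LipschitzWith.of_dist_le_mul h
      rw [this]
      refine isClosed_iInter fun x => isClosed_iInter fun y => ?_
      exact isClosed_le (Continuous.dist (continuous_apply x) (continuous_apply y))
        continuous_const
    exact hcl.isCompact
  · -- equicontinuous
    apply Metric.equicontinuous_of_continuity_modulus (fun r => c * r)
    · exact (continuous_const.mul continuous_id).tendsto' 0 0 (by simp)
    · rintro x y ⟨f, hf⟩
      exact hf.dist_le_mul x y

/-- The set `S_n` of `n`-tuples of continuous weakly increasing surjections of `[0,1]`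
averaging to the identity is compact in the product of the sup-metric topologies. -/
theorem stmt_11 (n : ℕ) (hn : 1 ≤ n) :
    IsCompact {ξ : Fin n → C(unitInterval, unitInterval) |
      (∀ i, Monotone (ξ i) ∧ Function.Surjective (ξ i)) ∧
      ∀ t : unitInterval, (1 / n : ℝ) * ∑ i, (ξ i t : ℝ) = t} := by
  have hn0 : (n : ℝ) ≠ 0 := Nat.cast_ne_zero.mpr (by omega)
  set S : Set (Fin n → C(unitInterval, unitInterval)) :=
    {ξ | (∀ i, Monotone (ξ i) ∧ Function.Surjective (ξ i)) ∧
      ∀ t : unitInterval, (1 / n : ℝ) * ∑ i, (ξ i t : ℝ) = t} with hS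
  -- sum identity
  have hsum : ∀ ξ ∈ S, ∀ t : unitInterval, ∑ i, ((ξ : Fin n → _) i t : ℝ) = n * t := by
    intro ξ hξ t
    have := hξ.2 t
    field_simp at this
    linarith [this]
  -- Lipschitz bound
  have hlip : ∀ ξ ∈ S, ∀ i, LipschitzWith (n : ℝ≥0) ((ξ : Fin n → _) i) := by
    intro ξ hξ i
    apply LipschitzWith.of_dist_le_mul
    intro s t
    wlog h : s ≤ t generalizing s t
    · rw [dist_comm, dist_comm s t]; exact this t s (le_of_not_ge h)
    have hmono : ∀ j, (ξ j s : ℝ) ≤ ξ j t := fun j => (hξ.1 j).1 h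
    have key : (ξ i t : ℝ) - ξ i s ≤ n * ((t : ℝ) - s) := by
      have h1 : ∑ j, ((ξ j t : ℝ) - ξ j s) = n * ((t:ℝ) - s) := by
        rw [Finset.sum_sub_distrib, hsum ξ hξ t, hsum ξ hξ s]; ring
      have h2 : (ξ i t : ℝ) - ξ i s ≤ ∑ j, ((ξ j t : ℝ) - ξ j s) :=
        Finset.single_le_sum (f := fun j => (ξ j t : ℝ) - ξ j s)
          (fun j _ => sub_nonneg.mpr (hmono j)) (Finset.mem_univ i)
      linarith
    rw [Subtype.dist_eq, Subtype.dist_eq, Real.dist_eq, Real.dist_eq,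
      abs_of_nonpos (by linarith [hmono i]), abs_of_nonpos (sub_nonpos.mpr (Subtype.coe_le_coe.mpr h))]
    push_cast
    linarith
  -- S is closed
  have hclosed : IsClosed S := by
    have hSeq : S = {ξ : Fin n → C(unitInterval, unitInterval) |
        (∀ i, Monotone (ξ i)) ∧ (∀ i, (ξ i 0 : ℝ) = 0 ∧ (ξ i 1 : ℝ) = 1) ∧
        ∀ t : unitInterval, (1 / n : ℝ) * ∑ i, (ξ i t : ℝ) = t} := by
      ext ξ
      simp only [Set.mem_setOf_eq]
      constructor
      · rintro ⟨h1, h2⟩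
        refine ⟨fun i => (h1 i).1, fun i => ?_, h2⟩
        obtain ⟨a, ha⟩ := (h1 i).2 0
        obtain ⟨b, hb⟩ := (h1 i).2 1
        constructor
        · have h' : ξ i 0 ≤ ξ i a := (h1 i).1 (by exact nonneg')
          rw [ha] at h'
          have h0 : ξ i 0 = 0 := le_antisymm h' nonneg'
          rw [h0]; simp
        · have h' : ξ i b ≤ ξ i 1 := (h1 i).1 (by exact le_one')
          rw [hb] at h'
          have h0 : ξ i 1 = 1 := le_antisymm le_one' h'
          rw [h0]; simp
      · rintro ⟨h1, h2, h3⟩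
        refine ⟨fun i => ⟨h1 i, ?_⟩, h3⟩
        intro y
        have : y ∈ Set.Icc (ξ i 0) (ξ i 1) := by
          constructor
          · exact Subtype.coe_le_coe.mp (by rw [(h2 i).1]; exact y.2.1)
          · exact Subtype.coe_le_coe.mp (by rw [(h2 i).2]; exact y.2.2)
        exact intermediate_value_univ 0 1 (ξ i).continuous this
    rw [hSeq]
    have c1 : IsClosed {ξ : Fin n → C(unitInterval, unitInterval) | ∀ i, Monotone (ξ i)} := by
      have : {ξ : Fin n → C(unitInterval, unitInterval) | ∀ i, Monotone (ξ i)} =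
          ⋂ (i : Fin n), ⋂ (s : unitInterval), ⋂ (t : unitInterval), ⋂ (_ : s ≤ t),
            {ξ : Fin n → C(unitInterval, unitInterval) | ξ i s ≤ ξ i t} := by
        ext ξ; simp only [Set.mem_setOf_eq, Set.mem_iInter]
        exact ⟨fun h i s t hst => h i hst, fun h i s t hst => h i s t hst⟩
      rw [this]
      refine isClosed_iInter fun i => isClosed_iInter fun s => isClosed_iInter fun t =>
        isClosed_iInter fun _ => ?_
      exact isClosed_le
        ((continuous_eval_const s).comp (continuous_apply i))
        ((continuous_eval_const t).comp (continuous_apply i))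
    have c2 : IsClosed {ξ : Fin n → C(unitInterval, unitInterval) |
        ∀ i, (ξ i 0 : ℝ) = 0 ∧ (ξ i 1 : ℝ) = 1} := by
      have : {ξ : Fin n → C(unitInterval, unitInterval) |
          ∀ i, (ξ i 0 : ℝ) = 0 ∧ (ξ i 1 : ℝ) = 1} =
          ⋂ (i : Fin n), ({ξ : Fin n → C(unitInterval, unitInterval) | (ξ i 0 : ℝ) = 0} ∩
            {ξ | (ξ i 1 : ℝ) = 1}) := by
        ext ξ; simp [Set.mem_iInter, forall_and]
      rw [this]
      refine isClosed_iInter fun i => IsClosed.inter ?_ ?_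
      · exact isClosed_eq
          (((continuous_eval_const 0).comp (continuous_apply i)).subtype_val : Continuous _)
          continuous_const
      · exact isClosed_eq
          (((continuous_eval_const 1).comp (continuous_apply i)).subtype_val : Continuous _)
          continuous_const
    have c3 : IsClosed {ξ : Fin n → C(unitInterval, unitInterval) |
        ∀ t : unitInterval, (1 / n : ℝ) * ∑ i, (ξ i t : ℝ) = t} := by
      have : {ξ : Fin n → C(unitInterval, unitInterval) |
          ∀ t : unitInterval, (1 / n : ℝ) * ∑ i, (ξ i t : ℝ) = t} =
          ⋂ (t : unitInterval),
            {ξ : Fin n → C(unitInterval, unitInterval) | (1 / n : ℝ) * ∑ i, (ξ i t : ℝ) = t} := by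
        ext ξ; simp [Set.mem_iInter]
      rw [this]
      refine isClosed_iInter fun t => isClosed_eq ?_ continuous_const
      exact continuous_const.mul (continuous_finset_sum _ fun i _ =>
        (((continuous_eval_const t).comp (continuous_apply i)).subtype_val))
    simp only [Set.setOf_and]
    exact c1.inter (c2.inter c3)
  -- conclude via Arzela-Ascoli superset
  apply IsCompact.of_isClosed_subset (isCompact_univ_pi fun _ => lipK_compact (n : ℝ≥0)) hclosed
  intro ξ hξ
  rw [Set.mem_univ_pi]
  intro i
  exact hlip ξ hξ i
end

section
/- Let n ≥ 1 and let ξ = (ξ_0, …, ξ_{n−1}) ∈ 𝔐ⁿ. Set μ(t) = (1/n)·Σ_{i<n} ξ_i(t) and μ*(t) = inf { s ∈ [0,1] : μ(s) ≥ t }. Then: (a) for each i, the function ξ̃_i := ξ_i ∘ μ* is a continuous weakly increasing surjection of [0,1], i.e. ξ̃_i ∈ 𝔐; (b) (1/n)·Σ_{i<n} ξ̃_i = id_{[0,1]}, i.e. ξ̃ ∈ S_n; and (c) ξ̃_i ∘ μ = ξ_i for each i. -/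
/-!
The mean `μ` is a continuous monotone surjection of `[0,1]`, so its left-continuous partial
inverse `μ*` satisfies `μ ∘ μ* = id` and `μ* (μ s) ≤ s`. Since `μ (μ* (μ s)) = μ s` and every `ξᵢ`
is monotone, the inequalities `ξᵢ (μ* (μ s)) ≤ ξᵢ s` have equal averages, hence are equalities:
each `ξᵢ` is constant on the fibres of `μ`. This gives `ξ̃ᵢ ∘ μ = ξᵢ`, hence the surjectivity of
`ξ̃ᵢ`; the average of the `ξ̃ᵢ` is `μ ∘ μ* = id`; and a monotone map onto an interval is continuous.
-/

open Set

theorem MonotoneOn.continuousOn_of_ordConnected_image {α β : Type*} [LinearOrder α]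
    [TopologicalSpace α] [OrderTopology α] [LinearOrder β] [TopologicalSpace β] [OrderTopology β]
    [DenselyOrdered β] {f : α → β} {s : Set α} [OrdConnected s] (hf : MonotoneOn f s)
    (himage : (f '' s).OrdConnected) : ContinuousOn f s := by
  rw [continuousOn_iff_continuous_domRestrict]
  let g : s → f '' s := fun x => ⟨f x, mem_image_of_mem f x.2⟩
  have hg : Continuous g :=
    Monotone.continuous_of_surjective (fun x y hxy => hf x.2 y.2 hxy)
      (by rintro ⟨_, x, hx, rfl⟩; exact ⟨⟨x, hx⟩, rfl⟩)
  exact continuous_subtype_val.comp hg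

theorem MonotoneOn.apply_eq_of_image_Icc_eq {α β : Type*} [Preorder α] [PartialOrder β]
    {f : α → β} {a b : α} {c d : β} (hab : a ≤ b) (hcd : c ≤ d) (hf : MonotoneOn f (Icc a b))
    (himage : f '' Icc a b = Icc c d) : f a = c ∧ f b = d := by
  have hleast := isLeast_Icc hcd
  have hgreatest := isGreatest_Icc hcd
  rw [← himage] at hleast hgreatest
  exact ⟨(hf.map_isLeast (isLeast_Icc hab)).unique hleast,
    (hf.map_isGreatest (isGreatest_Icc hab)).unique hgreatest⟩

theorem Finset.apply_eq_of_sum_eq_of_monotoneOn {ι α M : Type*} [LinearOrder α] [AddCommMonoid M]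
    [PartialOrder M] [IsOrderedCancelAddMonoid M] (s : Finset ι) {f : ι → α → M} {S : Set α}
    (hf : ∀ i ∈ s, MonotoneOn (f i) S) {x y : α} (hx : x ∈ S) (hy : y ∈ S)
    (hsum : ∑ i ∈ s, f i x = ∑ i ∈ s, f i y) {i : ι} (hi : i ∈ s) : f i x = f i y := by
  wlog hxy : x ≤ y generalizing x y
  · exact (this hy hx hsum.symm (le_of_not_ge hxy)).symm
  exact (Finset.sum_eq_sum_iff_of_le fun j hj => hf j hj hx hy hxy).1 hsum i hi

section PartialInv

variable {α β γ : Type*} [ConditionallyCompleteLinearOrder α] [LinearOrder β]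
  {μ : α → β} {a b s : α} {t : β}

/-- The paper's `μ*`, for `μ` restricted to `[a, b]`. -/
noncomputable def partialInv (μ : α → β) (a b : α) (t : β) : α :=
  sInf {s ∈ Icc a b | t ≤ μ s}

theorem monotoneOn_partialInv : MonotoneOn (partialInv μ a b) (μ '' Icc a b) := by
  rintro _ - _ ⟨s, hs, rfl⟩ htt'
  exact csInf_le_csInf ⟨a, fun _ hs => hs.1.1⟩ ⟨s, hs, le_rfl⟩ fun _ hs => ⟨hs.1, htt'.trans hs.2⟩

variable [TopologicalSpace α] [OrderTopology α] [TopologicalSpace β] [OrderClosedTopology β]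

theorem isLeast_partialInv (hμ : ContinuousOn μ (Icc a b)) (ht : t ∈ μ '' Icc a b) :
    IsLeast {s ∈ Icc a b | t ≤ μ s} (partialInv μ a b t) := by
  obtain ⟨s, hs, rfl⟩ := ht
  exact (hμ.preimage_isClosed_of_isClosed isClosed_Icc isClosed_Ici).isLeast_csInf
    ⟨s, hs, le_rfl⟩ ⟨a, fun _ hs => hs.1.1⟩

theorem mapsTo_partialInv (hμ : ContinuousOn μ (Icc a b)) :
    MapsTo (partialInv μ a b) (μ '' Icc a b) (Icc a b) :=
  fun _ ht => (isLeast_partialInv hμ ht).1.1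

theorem map_partialInv (hμ : ContinuousOn μ (Icc a b)) (hmono : MonotoneOn μ (Icc a b))
    (ht : t ∈ μ '' Icc a b) : μ (partialInv μ a b t) = t := by
  have hleast := isLeast_partialInv hμ ht
  obtain ⟨s, hs, rfl⟩ := ht
  exact le_antisymm (hmono hleast.1.1 hs (hleast.2 ⟨hs, le_rfl⟩)) hleast.1.2

theorem apply_partialInv_map {g : α → γ} (hμ : ContinuousOn μ (Icc a b))
    (hmono : MonotoneOn μ (Icc a b)) (hg : ∀ x ∈ Icc a b, ∀ y ∈ Icc a b, μ x = μ y → g x = g y)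
    (hs : s ∈ Icc a b) : g (partialInv μ a b (μ s)) = g s :=
  hg _ (mapsTo_partialInv hμ (mem_image_of_mem μ hs)) s hs
    (map_partialInv hμ hmono (mem_image_of_mem μ hs))

theorem image_comp_partialInv {g : α → γ} (hμ : ContinuousOn μ (Icc a b))
    (hmono : MonotoneOn μ (Icc a b)) (hg : ∀ x ∈ Icc a b, ∀ y ∈ Icc a b, μ x = μ y → g x = g y) :
    (g ∘ partialInv μ a b) '' (μ '' Icc a b) = g '' Icc a b := by
  rw [image_image]
  exact image_congr fun s hs => apply_partialInv_map hμ hmono hg hs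

end PartialInv

/-- For an `n`-tuple `ξ` of continuous weakly increasing surjections of `[0,1]`, with
`μ = (1/n) Σ ξᵢ` and `μ*(t) = inf {s ∈ [0,1] : μ(s) ≥ t}`, the tuple `ξ̃ = ξ ∘ μ*`
consists of continuous weakly increasing surjections, averages to the identity, and
satisfies `ξ̃ᵢ ∘ μ = ξᵢ`. -/
theorem stmt_12 (n : ℕ) (hn : 1 ≤ n) (ξ : Fin n → ℝ → ℝ)
    (hcont : ∀ i, ContinuousOn (ξ i) (Set.Icc 0 1))
    (hmono : ∀ i, MonotoneOn (ξ i) (Set.Icc 0 1))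
    (hsurj : ∀ i, ξ i '' Set.Icc 0 1 = Set.Icc 0 1)
    (μ : ℝ → ℝ) (hμ : ∀ t, μ t = (1 / n : ℝ) * ∑ i, ξ i t)
    (μs : ℝ → ℝ) (hμs : ∀ t, μs t = sInf {s ∈ Set.Icc (0 : ℝ) 1 | t ≤ μ s}) :
    (∀ i, ContinuousOn (ξ i ∘ μs) (Set.Icc 0 1) ∧ MonotoneOn (ξ i ∘ μs) (Set.Icc 0 1) ∧
        (ξ i ∘ μs) '' Set.Icc 0 1 = Set.Icc 0 1) ∧
      (∀ t ∈ Set.Icc (0 : ℝ) 1, (1 / n : ℝ) * ∑ i, (ξ i ∘ μs) t = t) ∧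
      (∀ i, ∀ t ∈ Set.Icc (0 : ℝ) 1, (ξ i ∘ μs) (μ t) = ξ i t) := by
  have hn' : (n : ℝ) ≠ 0 := Nat.cast_ne_zero.2 (by omega)
  have hξ : ∀ i, ξ i 0 = 0 ∧ ξ i 1 = 1 := fun i =>
    (hmono i).apply_eq_of_image_Icc_eq zero_le_one zero_le_one (hsurj i)
  have hμmono : MonotoneOn μ (Icc 0 1) := fun x hx y hy hxy => by
    rw [hμ, hμ]
    gcongr with i
    exact hmono i hx hy hxy
  have hμcont : ContinuousOn μ (Icc 0 1) := by
    rw [funext hμ]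
    fun_prop (disch := assumption)
  have hμimage : μ '' Icc 0 1 = Icc 0 1 := by
    rw [hμcont.image_Icc_of_monotoneOn zero_le_one hμmono, hμ, hμ]
    simp [hξ, hn']
  have hfiber : ∀ i, ∀ x ∈ Icc (0 : ℝ) 1, ∀ y ∈ Icc (0 : ℝ) 1, μ x = μ y → ξ i x = ξ i y := by
    intro i x hx y hy hxy
    rw [hμ, hμ] at hxy
    exact Finset.univ.apply_eq_of_sum_eq_of_monotoneOn (fun i _ => hmono i) hx hy
      (mul_left_cancel₀ (by positivity) hxy) (Finset.mem_univ i)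
  obtain rfl : μs = partialInv μ 0 1 := funext hμs
  refine ⟨fun i => ?_, fun t ht => ?_,
    fun i t ht => apply_partialInv_map hμcont hμmono (hfiber i) ht⟩
  · have himage := image_comp_partialInv hμcont hμmono (hfiber i)
    have hmono' := (hmono i).comp monotoneOn_partialInv (mapsTo_partialInv hμcont)
    rw [hμimage, hsurj i] at himage
    rw [hμimage] at hmono'
    have hcont' :=
      hmono'.continuousOn_of_ordConnected_image (by rw [himage]; exact ordConnected_Icc)
    exact ⟨hcont', hmono', himage⟩
  · simp only [Function.comp_apply, ← hμ]
    exact map_partialInv hμcont hμmono (hμimage.symm ▸ ht)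
end

section
/- Let n ≥ 1 and let ξ, ζ ∈ S_n (n-tuples of continuous weakly increasing surjections of [0,1] averaging to the identity). If ζ lies in the closure of the Homeo⁺[0,1]-orbit of ξ, i.e. for every ε > 0 there exists g ∈ Homeo⁺[0,1] with sup_{t∈[0,1]} |ξ_i(g⁻¹(t)) − ζ_i(t)| < ε for all i < n, then ξ = ζ. (Hence distinct elements of S_n have distinct orbit closures in 𝔐ⁿ.) -/
/-- Two elements of `S_n` (tuples of continuous weakly increasing surjections of `[0,1]`
averaging to the identity) with the same `Homeo⁺[0,1]`-orbit closure are equal: if `ζ`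
can be uniformly approximated by `ξ ∘ g⁻¹` for `g ∈ Homeo⁺[0,1]`, then `ξ = ζ`. -/
theorem stmt_13 (n : ℕ) (hn : 1 ≤ n) (ξ ζ : Fin n → unitInterval → unitInterval)
    (hξ : ∀ i, Continuous (ξ i) ∧ Monotone (ξ i) ∧ Function.Surjective (ξ i))
    (hζ : ∀ i, Continuous (ζ i) ∧ Monotone (ζ i) ∧ Function.Surjective (ζ i))
    (hξavg : ∀ t : unitInterval, (1 / n : ℝ) * ∑ i, (ξ i t : ℝ) = t)
    (hζavg : ∀ t : unitInterval, (1 / n : ℝ) * ∑ i, (ζ i t : ℝ) = t)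
    (horbit : ∀ ε > (0 : ℝ), ∃ g : unitInterval ≃ₜ unitInterval, g 0 = 0 ∧ g 1 = 1 ∧
      ∀ (i : Fin n) (t : unitInterval), |(ξ i (g.symm t) : ℝ) - (ζ i t : ℝ)| < ε) :
    ξ = ζ := by
  have hnR : (0 : ℝ) < n := by exact_mod_cast hn
  funext i t
  apply Subtype.ext
  by_contra hne
  have hpos : 0 < |(ξ i t : ℝ) - (ζ i t : ℝ)| :=
    abs_pos.mpr (sub_ne_zero.mpr hne)
  set D : ℝ := |(ξ i t : ℝ) - (ζ i t : ℝ)| with hD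
  -- continuity of ξ i at t
  obtain ⟨η, hη, hcontt⟩ :
      ∃ η > 0, ∀ s : unitInterval, dist s t < η → dist (ξ i s) (ξ i t) < D / 3 :=
    Metric.continuous_iff.mp (hξ i).1 t (D / 3) (by positivity)
  set ε : ℝ := min η (D / 3) with hε
  have hεpos : 0 < ε := lt_min hη (by positivity)
  obtain ⟨g, hg0, hg1, hg⟩ := horbit ε hεpos
  -- sums
  have hsumξ : ∑ j, (ξ j (g.symm t) : ℝ) = n * (g.symm t : ℝ) := by
    have := hξavg (g.symm t)
    field_simp at this
    linarith [this]
  have hsumζ : ∑ j, (ζ j t : ℝ) = n * (t : ℝ) := by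
    have := hζavg t
    field_simp at this
    linarith [this]
  -- key: g.symm t is close to t
  have key : |(g.symm t : ℝ) - (t : ℝ)| < ε := by
    have h1 : (n : ℝ) * ((g.symm t : ℝ) - (t : ℝ)) =
        ∑ j, ((ξ j (g.symm t) : ℝ) - (ζ j t : ℝ)) := by
      rw [Finset.sum_sub_distrib, hsumξ, hsumζ]; ring
    have h2 : |∑ j, ((ξ j (g.symm t) : ℝ) - (ζ j t : ℝ))| < n * ε := by
      calc |∑ j, ((ξ j (g.symm t) : ℝ) - (ζ j t : ℝ))|
          ≤ ∑ j, |(ξ j (g.symm t) : ℝ) - (ζ j t : ℝ)| := Finset.abs_sum_le_sum_abs _ _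
        _ < ∑ _j : Fin n, ε := by
            apply Finset.sum_lt_sum_of_nonempty
            · exact Finset.univ_nonempty_iff.mpr ⟨⟨0, hn⟩⟩
            · intro j _; exact hg j t
        _ = n * ε := by simp [mul_comm]
    have h3 : (n : ℝ) * |(g.symm t : ℝ) - (t : ℝ)| < n * ε := by
      calc (n : ℝ) * |(g.symm t : ℝ) - (t : ℝ)| = |(n : ℝ)| * |(g.symm t : ℝ) - (t : ℝ)| := by
            rw [abs_of_pos hnR]
        _ = |(n : ℝ) * ((g.symm t : ℝ) - (t : ℝ))| := (abs_mul _ _).symm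
        _ = |∑ j, ((ξ j (g.symm t) : ℝ) - (ζ j t : ℝ))| := by rw [h1]
        _ < n * ε := h2
    exact lt_of_mul_lt_mul_left h3 (le_of_lt hnR)
  have hdist : dist (g.symm t) t < η := by
    rw [Subtype.dist_eq, Real.dist_eq]
    exact lt_of_lt_of_le key (min_le_left _ _)
  have hc : |(ξ i (g.symm t) : ℝ) - (ξ i t : ℝ)| < D / 3 := by
    have := hcontt (g.symm t) hdist
    rwa [Subtype.dist_eq, Real.dist_eq] at this
  have hgi : |(ξ i (g.symm t) : ℝ) - (ζ i t : ℝ)| < D / 3 :=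
    lt_of_lt_of_le (hg i t) (min_le_right _ _)
  have : D < D := by
    calc D = |(ξ i t : ℝ) - (ζ i t : ℝ)| := hD
      _ ≤ |(ξ i t : ℝ) - (ξ i (g.symm t) : ℝ)| + |(ξ i (g.symm t) : ℝ) - (ζ i t : ℝ)| :=
          abs_sub_le _ _ _
      _ < D / 3 + D / 3 := by rw [abs_sub_comm]; exact add_lt_add hc hgi
      _ < D := by linarith
  exact lt_irrefl _ this
end

section
/- Let ρ be a pseudometric on 𝔐 which is continuous with respect to the sup metric and invariant under the Homeo⁺[0,1]-action (ρ(ξ∘g, ζ∘g) = ρ(ξ,ζ) for all g ∈ Homeo⁺[0,1]). If (α,β) and (γ,δ) are ρ-gaps with (α,β) ∩ (γ,δ) ≠ ∅, then their union, the interval (min(α,γ), max(β,δ)), is also a ρ-gap. -/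
/-- The space `𝔐` of continuous weakly increasing surjections of `[0,1]`, with the
sup metric (inherited from `C([0,1],[0,1])`). -/
def M : Type :=
  {f : C(unitInterval, unitInterval) // Monotone f ∧ Function.Surjective f}

noncomputable instance : MetricSpace M := Subtype.metricSpace

/-- Right composition of `ξ ∈ 𝔐` with an increasing self-homeomorphism `g` of `[0,1]`,
i.e. the action of `g⁻¹ ∈ Homeo⁺[0,1]` on `ξ`. -/
def Mcomp (ξ : M) (g : unitInterval ≃ₜ unitInterval) (hg : Monotone g) : M :=
  ⟨(ξ.1).comp ⟨⇑g, g.continuous⟩, by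
    constructor
    · intro a b hab
      exact ξ.2.1 (hg hab)
    · intro y
      obtain ⟨x, hx⟩ := ξ.2.2 y
      exact ⟨g.symm x, by simpa using hx⟩⟩

/-- `(α,β)` is a `ρ`-gap: a nonempty open subinterval of `(0,1)` for which there are
`ξ, ζ ∈ 𝔐` with `ρ(ξ,ζ) = 0` and, for every `s`, `ξ(s) ≤ α` or `ζ(s) ≥ β`. -/
def IsGap (ρ : M → M → ℝ) (α β : ℝ) : Prop :=
  0 ≤ α ∧ α < β ∧ β ≤ 1 ∧
    ∃ ξ ζ : M, ρ ξ ζ = 0 ∧ ∀ s : unitInterval, (ξ.1 s : ℝ) ≤ α ∨ β ≤ (ζ.1 s : ℝ)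

/-- `U_ρ`, the union of all `ρ`-gaps. -/
def Urho (ρ : M → M → ℝ) : Set ℝ :=
  {t | ∃ α β : ℝ, IsGap ρ α β ∧ t ∈ Set.Ioo α β}

/-!
A `ρ`-null pair `ξ, ζ` factors through its average `u` as `ξ = Φ ∘ u`, `ζ = Ψ ∘ u`, and then
`ρ (Φ ∘ m) (Ψ ∘ m) = 0` for every `m ∈ 𝔐`: the `Homeo⁺[0,1]`-orbit of `u` is dense in `𝔐`, and `ρ`
is continuous and invariant. If `(Φ₁, Ψ₁)` and `(Φ₂, Ψ₂)` realise the gaps `(α, β)` and `(γ, δ)`,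
pick `m, m' ∈ 𝔐` with `Ψ₁ ∘ m = Φ₂ ∘ m'`. By the triangle inequality `ρ (Φ₁ ∘ m) (Ψ₂ ∘ m') = 0`,
and wherever `Φ₁ ∘ m > α` we get `Φ₂ ∘ m' = Ψ₁ ∘ m ≥ β > γ`, hence `Ψ₂ ∘ m' ≥ δ`.
-/

open Set Function unitInterval

lemma unitInterval.surjective_of_continuous {f : I → I} (hc : Continuous f) (h0 : f 0 = 0)
    (h1 : f 1 = 1) : Surjective f := fun y =>
  intermediate_value_univ 0 1 hc (by rw [h0, h1]; exact ⟨nonneg', le_one'⟩)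

lemma Monotone.exists_monotone_comp_eq {α β γ : Type*} [LinearOrder α] [PartialOrder β]
    [Preorder γ] {u : α → β} {ξ : α → γ} (hu : Monotone u) (hus : Surjective u)
    (hξ : Monotone ξ) (hfib : ∀ s s', u s = u s' → ξ s = ξ s') :
    ∃ Φ : β → γ, Monotone Φ ∧ Φ ∘ u = ξ := by
  refine ⟨ξ ∘ surjInv hus, fun v v' hvv' => ?_, funext fun s => hfib _ _ (surjInv_eq hus _)⟩
  rcases le_total (surjInv hus v) (surjInv hus v') with h | h
  · exact hξ h
  · have h' := hu h
    rw [surjInv_eq hus, surjInv_eq hus] at h'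
    rw [le_antisymm hvv' h']

namespace M

lemma map_zero (ξ : M) : ξ.1 0 = 0 := by
  obtain ⟨a, ha⟩ := ξ.2.2 0
  exact le_antisymm ((ξ.2.1 nonneg').trans_eq ha) nonneg'

lemma map_one (ξ : M) : ξ.1 1 = 1 := by
  obtain ⟨a, ha⟩ := ξ.2.2 1
  exact le_antisymm le_one' (ha.symm.trans_le (ξ.2.1 le_one'))

lemma ext {ξ ζ : M} (h : ∀ s, ξ.1 s = ζ.1 s) : ξ = ζ :=
  Subtype.ext (ContinuousMap.ext h)

def ofContinuous (f : I → I) (hc : Continuous f) (hm : Monotone f) (h0 : f 0 = 0)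
    (h1 : f 1 = 1) : M :=
  ⟨⟨f, hc⟩, hm, surjective_of_continuous hc h0 h1⟩

def comp (ξ ζ : M) : M :=
  ⟨ξ.1.comp ζ.1, ξ.2.1.comp ζ.2.1, ξ.2.2.comp ζ.2.2⟩

lemma continuous_comp (ξ : M) : Continuous ξ.comp :=
  ((ContinuousMap.continuous_postcomp ξ.1).comp continuous_subtype_val).subtype_mk _

lemma exists_comp_eq (u ξ : M) (hfib : ∀ s s', u.1 s = u.1 s' → ξ.1 s = ξ.1 s') :
    ∃ Φ : M, Φ.comp u = ξ := by
  obtain ⟨Φ, hΦm, hΦu⟩ := Monotone.exists_monotone_comp_eq u.2.1 u.2.2 ξ.2.1 hfib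
  have hΦs : Surjective Φ := Surjective.of_comp (hΦu ▸ ξ.2.2)
  exact ⟨⟨⟨Φ, hΦm.continuous_of_surjective hΦs⟩, hΦm, hΦs⟩, ext (congrFun hΦu)⟩

noncomputable def midpoint (ξ ζ : M) : M :=
  ofContinuous (fun s => ⟨((ξ.1 s : ℝ) + ζ.1 s) / 2, by
      constructor <;> linarith [nonneg (ξ.1 s), nonneg (ζ.1 s), le_one (ξ.1 s), le_one (ζ.1 s)]⟩)
    (by fun_prop)
    (fun a b hab => by
      show ((ξ.1 a : ℝ) + ζ.1 a) / 2 ≤ ((ξ.1 b : ℝ) + ζ.1 b) / 2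
      linarith [show (ξ.1 a : ℝ) ≤ ξ.1 b from ξ.2.1 hab, show (ζ.1 a : ℝ) ≤ ζ.1 b from ζ.2.1 hab])
    (by ext; simp [map_zero])
    (by ext; simp [map_one])

lemma coe_midpoint_apply (ξ ζ : M) (s : I) :
    ((midpoint ξ ζ).1 s : ℝ) = ((ξ.1 s : ℝ) + ζ.1 s) / 2 :=
  rfl

/-- Since `ξ` and `ζ` are monotone, a fibre of their average is a fibre of both. -/
lemma exists_comp_midpoint_eq (ξ ζ : M) :
    ∃ u Φ Ψ : M, ξ = Φ.comp u ∧ ζ = Ψ.comp u := by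
  have hfib : ∀ s s', s ≤ s' → (midpoint ξ ζ).1 s = (midpoint ξ ζ).1 s' →
      ξ.1 s = ξ.1 s' ∧ ζ.1 s = ζ.1 s' := by
    intro s s' hss' h
    have hξ : (ξ.1 s : ℝ) ≤ ξ.1 s' := ξ.2.1 hss'
    have hζ : (ζ.1 s : ℝ) ≤ ζ.1 s' := ζ.2.1 hss'
    have hsum : (ξ.1 s : ℝ) + ζ.1 s = ξ.1 s' + ζ.1 s' := by
      have := congrArg Subtype.val h
      rw [coe_midpoint_apply, coe_midpoint_apply] at this
      linarith
    exact ⟨Subtype.ext (by linarith), Subtype.ext (by linarith)⟩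
  have hfib' : ∀ s s', (midpoint ξ ζ).1 s = (midpoint ξ ζ).1 s' →
      ξ.1 s = ξ.1 s' ∧ ζ.1 s = ζ.1 s' := by
    intro s s' h
    rcases le_total s s' with hss' | hs's
    · exact hfib s s' hss' h
    · exact (hfib s' s hs's h.symm).imp Eq.symm Eq.symm
  obtain ⟨Φ, hΦ⟩ := exists_comp_eq (midpoint ξ ζ) ξ fun s s' h => (hfib' s s' h).1
  obtain ⟨Ψ, hΨ⟩ := exists_comp_eq (midpoint ξ ζ) ζ fun s s' h => (hfib' s s' h).2
  exact ⟨midpoint ξ ζ, Φ, Ψ, hΦ.symm, hΨ.symm⟩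

lemma exists_le_map_eq (g : M) {b v : I} (hv : v ≤ g.1 b) : ∃ b' ≤ b, g.1 b' = v := by
  obtain ⟨b', hb', hgb'⟩ := intermediate_value_Icc (nonneg' : (0 : I) ≤ b)
    g.1.continuous.continuousOn ⟨(map_zero g).trans_le nonneg', hv⟩
  exact ⟨b', hb'.2, hgb'⟩

section Pullback

variable (f g : M)

def pullbackSet (s : I) : Set (I × I) :=
  {p | f.1 p.1 = g.1 p.2 ∧ (p.1 : ℝ) + p.2 ≤ 2 * s}

lemma zero_mem_pullbackSet (s : I) : (0, 0) ∈ pullbackSet f g s :=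
  ⟨by rw [map_zero, map_zero], by simpa using nonneg s⟩

lemma isCompact_pullbackSet (s : I) : IsCompact (pullbackSet f g s) :=
  IsClosed.isCompact <|
    (isClosed_eq (f.1.continuous.comp continuous_fst) (g.1.continuous.comp continuous_snd)).inter
      (isClosed_le (((continuous_subtype_val.comp continuous_fst).add
        (continuous_subtype_val.comp continuous_snd))) continuous_const)

variable {f g} in
lemma swap_mem_pullbackSet {s : I} {p : I × I} :
    p.swap ∈ pullbackSet f g s ↔ p ∈ pullbackSet g f s := by
  simp [pullbackSet, eq_comm, add_comm]

/-- Parametrising the fibre product `{f a = g b}` by `a + b` rather than by `a` is what makes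
`pullbackFst f g` continuous (indeed `2`-Lipschitz). -/
noncomputable def pullbackFst (s : I) : I :=
  sSup (Prod.fst '' pullbackSet f g s)

lemma exists_mem_pullbackSet_fst_eq (s : I) :
    ∃ p ∈ pullbackSet f g s, p.1 = pullbackFst f g s :=
  ((isCompact_pullbackSet f g s).image continuous_fst).sSup_mem
    ⟨_, mem_image_of_mem _ (zero_mem_pullbackSet f g s)⟩

variable {f g} in
lemma le_pullbackFst {s : I} {p : I × I} (hp : p ∈ pullbackSet f g s) :
    p.1 ≤ pullbackFst f g s :=
  le_sSup (mem_image_of_mem _ hp)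

lemma monotone_pullbackFst : Monotone (pullbackFst f g) := fun s s' hss' =>
  sSup_le_sSup (image_mono fun _ hp =>
    ⟨hp.1, hp.2.trans (by gcongr)⟩)

lemma pullbackFst_zero : pullbackFst f g 0 = 0 := by
  refine le_antisymm (sSup_le ?_) nonneg'
  rintro _ ⟨p, ⟨-, hp⟩, rfl⟩
  change (p.1 : ℝ) ≤ 0
  simp only [Icc.coe_zero, mul_zero] at hp
  linarith [nonneg p.2]

lemma pullbackFst_one : pullbackFst f g 1 = 1 :=
  le_antisymm le_one' (le_pullbackFst (p := (1, 1)) ⟨by rw [map_one, map_one], by norm_num⟩)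

lemma pullbackFst_le_add {s s' : I} (hss' : s ≤ s') :
    (pullbackFst f g s' : ℝ) ≤ pullbackFst f g s + 2 * (s' - s) := by
  obtain ⟨⟨a, b⟩, ⟨hab, hsum⟩, ha⟩ := exists_mem_pullbackSet_fst_eq f g s'
  rw [← ha]
  have hss'' : (s : ℝ) ≤ s' := hss'
  by_cases hsmall : (a : ℝ) - 2 * (s' - s) ≤ 0
  · linarith [nonneg (pullbackFst f g s)]
  set a' : I := ⟨a - 2 * (s' - s), by constructor <;> linarith [le_one a]⟩
  have ha' : a' ≤ a := show (a : ℝ) - 2 * (s' - s) ≤ a by linarith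
  obtain ⟨b', hb', hgb'⟩ := exists_le_map_eq g ((f.2.1 ha').trans_eq hab)
  have : a' ≤ pullbackFst f g s := le_pullbackFst (p := (a', b'))
    ⟨hgb'.symm, by simp only at hsum ⊢; linarith [show (b' : ℝ) ≤ b from hb']⟩
  exact sub_le_iff_le_add.mp this

lemma continuous_pullbackFst : Continuous (pullbackFst f g) := by
  have hlip : LipschitzWith 2 fun s => (pullbackFst f g s : ℝ) := by
    refine LipschitzWith.of_le_add_mul 2 fun s s' => ?_
    rw [Subtype.dist_eq, Real.dist_eq, NNReal.coe_ofNat]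
    rcases le_total s s' with hss' | hs's
    · have : (pullbackFst f g s : ℝ) ≤ pullbackFst f g s' := monotone_pullbackFst f g hss'
      linarith [abs_nonneg ((s : ℝ) - s')]
    · linarith [pullbackFst_le_add f g hs's, le_abs_self ((s : ℝ) - s')]
  exact continuous_induced_rng.2 hlip.continuous

noncomputable def pullback : M :=
  ofContinuous (pullbackFst f g) (continuous_pullbackFst f g) (monotone_pullbackFst f g)
    (pullbackFst_zero f g) (pullbackFst_one f g)

lemma comp_pullback_comm : f.comp (pullback f g) = g.comp (pullback g f) := by
  refine ext fun s => ?_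
  obtain ⟨p, hp, hp₁⟩ := exists_mem_pullbackSet_fst_eq f g s
  obtain ⟨q, hq, hq₁⟩ := exists_mem_pullbackSet_fst_eq g f s
  have hqp : q.2 ≤ p.1 := hp₁ ▸ le_pullbackFst (swap_mem_pullbackSet.2 hq)
  have hpq : p.2 ≤ q.1 := hq₁ ▸ le_pullbackFst (swap_mem_pullbackSet.2 hp)
  change f.1 (pullbackFst f g s) = g.1 (pullbackFst g f s)
  rw [← hp₁, ← hq₁]
  exact le_antisymm (hp.1.trans_le (g.2.1 hpq)) (hq.1.trans_le (f.2.1 hqp))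

end Pullback

/-- Perturbing `w` towards the identity makes it strictly increasing, hence an order
automorphism of `I`. -/
lemma exists_orderIso_dist_le (w : M) {θ : ℝ} (hθ : 0 < θ) (hθ1 : θ ≤ 1) :
    ∃ e : I ≃o I, ∀ t, dist (w.1 t) (e t) ≤ θ := by
  let f : I → I := fun t => ⟨(1 - θ) * w.1 t + θ * t, by
    constructor <;> nlinarith [nonneg (w.1 t), le_one (w.1 t), nonneg t, le_one t]⟩
  have hf : StrictMono f := fun a b hab => by
    change (1 - θ) * (w.1 a : ℝ) + θ * a < (1 - θ) * w.1 b + θ * b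
    have hw : (w.1 a : ℝ) ≤ w.1 b := w.2.1 hab.le
    have hab' : (a : ℝ) < b := hab
    nlinarith
  have hsurj : Surjective f := surjective_of_continuous (by fun_prop)
    (by ext; simp [f, map_zero]) (by ext; simp [f, map_one])
  refine ⟨hf.orderIsoOfSurjective f hsurj, fun t => ?_⟩
  rw [StrictMono.coe_orderIsoOfSurjective, Subtype.dist_eq, Real.dist_eq]
  change |(w.1 t : ℝ) - ((1 - θ) * w.1 t + θ * t)| ≤ θ
  rw [abs_le]
  constructor <;> nlinarith [nonneg (w.1 t), le_one (w.1 t), nonneg t, le_one t]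

lemma denseRange_Mcomp (u : M) :
    DenseRange fun e : I ≃o I => Mcomp u e.toHomeomorph e.monotone := by
  refine Metric.denseRange_iff.2 fun m r hr => ?_
  set θ := min (r / 3) 1
  have hθ : 0 < θ := lt_min (by linarith) one_pos
  obtain ⟨eu, heu⟩ := exists_orderIso_dist_le u hθ (min_le_right _ _)
  obtain ⟨em, hem⟩ := exists_orderIso_dist_le m hθ (min_le_right _ _)
  refine ⟨em.trans eu.symm, lt_of_le_of_lt (b := 2 * θ) ?_ (by linarith [min_le_left (r / 3) 1])⟩
  refine (ContinuousMap.dist_le (by linarith)).2 fun t => ?_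
  have hback : eu (eu.symm (em t)) = em t := eu.apply_symm_apply _
  calc dist (m.1 t) (u.1 (eu.symm (em t)))
      ≤ dist (m.1 t) (em t) + dist (eu (eu.symm (em t))) (u.1 (eu.symm (em t))) := by
        rw [hback]; exact dist_triangle _ _ _
    _ ≤ θ + θ := add_le_add (hem t) (by rw [dist_comm]; exact heu _)
    _ = 2 * θ := by ring

end M

open M

section Pseudometric

variable {ρ : M → M → ℝ}

/-- The relation `ρ (Φ ∘ m) (Ψ ∘ m) = 0` is closed in `m` and invariant under reparametrisation,
so it spreads from `u` to the dense orbit of `u` and then to all of `𝔐`. -/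
lemma comp_eq_zero_of_comp_eq_zero (hcont : Continuous fun p : M × M => ρ p.1 p.2)
    (hinv : ∀ (ξ ζ : M) (g : I ≃ₜ I) (hg : Monotone ⇑g),
      ρ (Mcomp ξ g hg) (Mcomp ζ g hg) = ρ ξ ζ)
    {Φ Ψ u : M} (h : ρ (Φ.comp u) (Ψ.comp u) = 0) (m : M) :
    ρ (Φ.comp m) (Ψ.comp m) = 0 :=
  (denseRange_Mcomp u).induction_on m
    (isClosed_eq (hcont.comp (Φ.continuous_comp.prodMk Ψ.continuous_comp)) continuous_const)
    fun e => (hinv (Φ.comp u) (Ψ.comp u) e.toHomeomorph e.monotone).trans h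

lemma IsGap.union_of_lt (hnonneg : ∀ ξ ζ, 0 ≤ ρ ξ ζ) (htri : ∀ ξ ζ χ, ρ ξ χ ≤ ρ ξ ζ + ρ ζ χ)
    (hcont : Continuous fun p : M × M => ρ p.1 p.2)
    (hinv : ∀ (ξ ζ : M) (g : I ≃ₜ I) (hg : Monotone ⇑g),
      ρ (Mcomp ξ g hg) (Mcomp ζ g hg) = ρ ξ ζ)
    {α β γ δ : ℝ} (h₁ : IsGap ρ α β) (h₂ : IsGap ρ γ δ) (hγβ : γ < β) (hαδ : α < δ) :
    IsGap ρ α δ := by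
  obtain ⟨hα, -, -, ξ₁, ζ₁, hρ₁, hsep₁⟩ := h₁
  obtain ⟨-, -, hδ, ξ₂, ζ₂, hρ₂, hsep₂⟩ := h₂
  obtain ⟨u₁, Φ₁, Ψ₁, rfl, rfl⟩ := exists_comp_midpoint_eq ξ₁ ζ₁
  obtain ⟨u₂, Φ₂, Ψ₂, rfl, rfl⟩ := exists_comp_midpoint_eq ξ₂ ζ₂
  have hsep₁' : ∀ v, (Φ₁.1 v : ℝ) ≤ α ∨ β ≤ Ψ₁.1 v := fun v => by
    obtain ⟨s, rfl⟩ := u₁.2.2 v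
    exact hsep₁ s
  have hsep₂' : ∀ v, (Φ₂.1 v : ℝ) ≤ γ ∨ δ ≤ Ψ₂.1 v := fun v => by
    obtain ⟨s, rfl⟩ := u₂.2.2 v
    exact hsep₂ s
  set m := pullback Ψ₁ Φ₂
  set m' := pullback Φ₂ Ψ₁
  have hmm' : Ψ₁.comp m = Φ₂.comp m' := comp_pullback_comm Ψ₁ Φ₂
  have hρ : ρ (Φ₁.comp m) (Ψ₂.comp m') = 0 := by
    refine le_antisymm ?_ (hnonneg _ _)
    calc ρ (Φ₁.comp m) (Ψ₂.comp m')
        ≤ ρ (Φ₁.comp m) (Ψ₁.comp m) + ρ (Φ₂.comp m') (Ψ₂.comp m') := hmm' ▸ htri _ _ _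
      _ = 0 := by
        rw [comp_eq_zero_of_comp_eq_zero hcont hinv hρ₁,
          comp_eq_zero_of_comp_eq_zero hcont hinv hρ₂, add_zero]
  refine ⟨hα, hαδ, hδ, _, _, hρ, fun s => (hsep₁' (m.1 s)).imp_right fun hβ => ?_⟩
  have hβ' : β ≤ Φ₂.1 (m'.1 s) := hβ.trans_eq (congrArg (fun ξ : M => (ξ.1 s : ℝ)) hmm')
  exact (hsep₂' (m'.1 s)).resolve_left (by linarith)

end Pseudometric

/-- The union of two intersecting `ρ`-gaps is a `ρ`-gap, for any continuous
`Homeo⁺[0,1]`-invariant pseudometric `ρ` on `𝔐`. -/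
theorem stmt_14
    (ρ : M → M → ℝ)
    (hrefl : ∀ ξ : M, ρ ξ ξ = 0)
    (hsymm : ∀ ξ ζ : M, ρ ξ ζ = ρ ζ ξ)
    (htri : ∀ ξ ζ χ : M, ρ ξ χ ≤ ρ ξ ζ + ρ ζ χ)
    (hcont : Continuous fun p : M × M => ρ p.1 p.2)
    (hinv : ∀ (ξ ζ : M) (g : unitInterval ≃ₜ unitInterval) (hg : Monotone ⇑g),
      ρ (Mcomp ξ g hg) (Mcomp ζ g hg) = ρ ξ ζ)
    (α β γ δ : ℝ) (h1 : IsGap ρ α β) (h2 : IsGap ρ γ δ)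
    (hint : max α γ < min β δ) :
    IsGap ρ (min α γ) (max β δ) := by
  have hnonneg : ∀ ξ ζ, 0 ≤ ρ ξ ζ := fun ξ ζ => by
    linarith [htri ξ ζ ξ, hrefl ξ, hsymm ζ ξ]
  have hαδ : α < δ := by linarith [le_max_left α γ, min_le_right β δ]
  have hγβ : γ < β := by linarith [le_max_right α γ, min_le_left β δ]
  rcases le_total α γ with hαγ | hγα <;> rcases le_total β δ with hβδ | hδβ
  · rw [min_eq_left hαγ, max_eq_right hβδ]
    exact h1.union_of_lt hnonneg htri hcont hinv h2 hγβ hαδ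
  · rwa [min_eq_left hαγ, max_eq_left hδβ]
  · rwa [min_eq_right hγα, max_eq_right hβδ]
  · rw [min_eq_right hγα, max_eq_left hδβ]
    exact h2.union_of_lt hnonneg htri hcont hinv h1 hαδ hγβ
end

section
/- Let g ∈ Homeo⁺[0,1] with g ≠ id. Then there exists a continuous weakly increasing surjection ξ : [0,1] → [0,1] such that sup_{t∈[0,1]} |ξ(g⁻¹(t)) − ξ(t)| = 1. (Consequently, the bi-invariant uniform distance d_u(g, id) = sup_{ξ∈𝔐} d(ξ∘g⁻¹, ξ) on Homeo⁺[0,1] is discrete.) -/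
/-!
Pick `x` with `g x ≠ x`. The piecewise-linear ramp that is `0` up to the smaller of `x`, `g x`
and `1` from the larger one on is a continuous monotone surjection `ξ`, and at `t = g x` it gives
`|ξ (g⁻¹ t) - ξ t| = |ξ x - ξ (g x)| = 1`, the largest value a difference of two points of
`[0,1]` can have.
-/

open Set unitInterval

namespace unitInterval

lemma abs_sub_le_one (s t : I) : |(s : ℝ) - t| ≤ 1 :=
  abs_sub_le_of_nonneg_of_le s.2.1 s.2.2 t.2.1 t.2.2

lemma exists_continuous_monotone_surjective_eq_zero_eq_one {a b : I} (hab : a < b) :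
    ∃ ξ : I → I, Continuous ξ ∧ Monotone ξ ∧ Function.Surjective ξ ∧ ξ a = 0 ∧ ξ b = 1 := by
  have hba : (0 : ℝ) < b - a := sub_pos.mpr hab
  set ξ : I → I := fun u => projIcc 0 1 zero_le_one ((u - a) / (b - a))
  have hcont : Continuous ξ := by fun_prop
  have hξa : ξ a = 0 := projIcc_eq_zero.mpr (by simp)
  have hξb : ξ b = 1 := projIcc_eq_one.mpr (by rw [div_self hba.ne'])
  refine ⟨ξ, hcont, ?_, fun y => ?_, hξa, hξb⟩
  · exact (monotone_projIcc _).comp fun u v huv => by gcongr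
  · exact intermediate_value_univ a b hcont (by rw [hξa, hξb]; exact ⟨nonneg', le_one'⟩)

lemma exists_continuous_monotone_surjective_abs_sub_eq_one {x y : I} (hxy : x ≠ y) :
    ∃ ξ : I → I, Continuous ξ ∧ Monotone ξ ∧ Function.Surjective ξ ∧
      |(ξ x : ℝ) - ξ y| = 1 := by
  rcases hxy.lt_or_gt with h | h
  · obtain ⟨ξ, hc, hm, hs, hx, hy⟩ := exists_continuous_monotone_surjective_eq_zero_eq_one h
    exact ⟨ξ, hc, hm, hs, by simp [hx, hy]⟩
  · obtain ⟨ξ, hc, hm, hs, hy, hx⟩ := exists_continuous_monotone_surjective_eq_zero_eq_one h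
    exact ⟨ξ, hc, hm, hs, by simp [hx, hy]⟩

lemma iSup_abs_sub_eq_one {α : Type*} {f h : α → I} {t : α} (ht : |(f t : ℝ) - h t| = 1) :
    (⨆ s, |(f s : ℝ) - h s|) = 1 :=
  have : Nonempty α := ⟨t⟩
  le_antisymm (ciSup_le fun s => abs_sub_le_one _ _)
    (le_ciSup_of_le ⟨1, by rintro _ ⟨s, rfl⟩; exact abs_sub_le_one _ _⟩ t ht.ge)

end unitInterval

theorem stmt_17_general (g : unitInterval ≃ₜ unitInterval)
    (hne : ⇑g ≠ id) :
    ∃ ξ : unitInterval → unitInterval,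
      Continuous ξ ∧ Monotone ξ ∧ Function.Surjective ξ ∧
      (⨆ t : unitInterval, |(ξ (g.symm t) : ℝ) - (ξ t : ℝ)|) = 1 := by
  obtain ⟨x, hx⟩ : ∃ x, g x ≠ x := by
    by_contra! h
    exact hne (funext h)
  obtain ⟨ξ, hc, hm, hs, hξ⟩ := exists_continuous_monotone_surjective_abs_sub_eq_one hx.symm
  refine ⟨ξ, hc, hm, hs, iSup_abs_sub_eq_one (t := g x) ?_⟩
  rwa [g.symm_apply_apply]

/-- For any `g ∈ Homeo⁺[0,1]` other than the identity there is a continuous weakly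
increasing surjection `ξ` of `[0,1]` with `sup_t |ξ(g⁻¹(t)) − ξ(t)| = 1`; hence the
bi-invariant uniform distance on `Homeo⁺[0,1]` is discrete. -/
theorem stmt_17 (g : unitInterval ≃ₜ unitInterval) (h0 : g 0 = 0) (h1 : g 1 = 1)
    (hne : ⇑g ≠ id) :
    ∃ ξ : unitInterval → unitInterval,
      Continuous ξ ∧ Monotone ξ ∧ Function.Surjective ξ ∧
      (⨆ t : unitInterval, |(ξ (g.symm t) : ℝ) - (ξ t : ℝ)|) = 1 :=
  stmt_17_general g hne
end

section
/- Let μ be Lebesgue measure on [0,1] and let φ be a measure-class-preserving transformation of μ which is not equal to the identity almost everywhere. Then there exists f ∈ L¹(μ) with ‖f‖₁ = 1 such that ‖φ·₁f − f‖₁ > 1, where φ·₁f = (d(φ_*μ)/dμ) · (f ∘ φ⁻¹). (Consequently, the bi-invariant uniform distance on Aut*(μ), given by uniform convergence of the action on the unit ball of L¹(μ), is discrete.) -/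
/-!
A transformation that is not a.e. the identity moves some set `A` of positive measure off
itself: separate `x` from `φ x` by disjoint basic open sets and use second countability.
For `f` the normalized indicator of `A`, `φ·₁f` is supported in `φ '' A`, disjoint from `A`,
and has the same `L¹` norm `1` as `f`, since the action is an isometry. Hence
`‖φ·₁f - f‖₁ = ‖φ·₁f‖₁ + ‖f‖₁ = 2`.
-/

open MeasureTheory

/-- Lebesgue measure on the unit interval `[0,1]`. -/
noncomputable def μ01 : Measure unitInterval :=
  Measure.comap Subtype.val volume

section MovedSet

variable {α : Type*} [TopologicalSpace α] [SecondCountableTopology α] [T2Space α]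
  [MeasurableSpace α] [OpensMeasurableSpace α]

theorem exists_pos_measure_disjoint_image {μ : Measure α} {f : α → α} (hf : Measurable f)
    (hne : ¬ f =ᵐ[μ] id) :
    ∃ A : Set α, MeasurableSet A ∧ 0 < μ A ∧ Disjoint A (f '' A) := by
  set B := TopologicalSpace.countableBasis α
  have hB := TopologicalSpace.isBasis_countableBasis α
  set S : Set (Set α × Set α) := {p | p.1 ∈ B ∧ p.2 ∈ B ∧ Disjoint p.1 p.2}
  have hS : S.Countable :=
    ((TopologicalSpace.countable_countableBasis α).prod
      (TopologicalSpace.countable_countableBasis α)).mono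
      fun p hp ↦ Set.mem_prod.2 ⟨hp.1, hp.2.1⟩
  have hcover : {x | f x ≠ x} ⊆ ⋃ p ∈ S, p.1 ∩ f ⁻¹' p.2 := by
    intro x hx
    obtain ⟨O₁, O₂, hO₁, hO₂, hxO₁, hxO₂, hO⟩ := t2_separation (Ne.symm hx)
    obtain ⟨U, hU, hxU, hUO⟩ := hB.exists_subset_of_mem_open hxO₁ hO₁
    obtain ⟨V, hV, hxV, hVO⟩ := hB.exists_subset_of_mem_open hxO₂ hO₂
    exact Set.mem_biUnion (x := (U, V)) ⟨hU, hV, hO.mono hUO hVO⟩ ⟨hxU, hxV⟩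
  have hpos : μ {x | f x ≠ x} ≠ 0 := fun h ↦ hne (ae_iff.2 h)
  obtain ⟨p, ⟨hU, hV, hUV⟩, hp⟩ : ∃ p ∈ S, μ (p.1 ∩ f ⁻¹' p.2) ≠ 0 := by
    by_contra! h
    exact hpos (measure_mono_null hcover ((measure_biUnion_null_iff hS).2 h))
  refine ⟨p.1 ∩ f ⁻¹' p.2, ?_, pos_iff_ne_zero.2 hp, ?_⟩
  · exact (hB.isOpen hU).measurableSet.inter (hf (hB.isOpen hV).measurableSet)
  · refine hUV.mono Set.inter_subset_left ?_
    rintro _ ⟨x, hx, rfl⟩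
    exact hx.2

end MovedSet

section L1Action

variable {α : Type*} [MeasurableSpace α] {μ : Measure α}

noncomputable def l1Smul (μ : Measure α) (φ : α ≃ᵐ α) (f : α → ℝ) : α → ℝ :=
  fun t ↦ ((μ.map φ).rnDeriv μ t).toReal * f (φ.symm t)

theorem integral_l1Smul [SigmaFinite μ] {φ : α ≃ᵐ α} (hφ : μ.map φ ≪ μ) (f : α → ℝ) :
    ∫ t, l1Smul μ φ f t ∂μ = ∫ t, f t ∂μ := by
  have := φ.sigmaFinite_map (μ := μ)
  simp only [l1Smul, integral_toReal_rnDeriv_mul hφ, integral_map_equiv,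
    MeasurableEquiv.symm_apply_apply]

theorem integrable_l1Smul_iff [SigmaFinite μ] {φ : α ≃ᵐ α} (hφ : μ.map φ ≪ μ) {f : α → ℝ} :
    Integrable (l1Smul μ φ f) μ ↔ Integrable f μ := by
  have := φ.sigmaFinite_map (μ := μ)
  unfold l1Smul
  rw [integrable_toReal_rnDeriv_mul_iff hφ, integrable_map_equiv]
  simp only [Function.comp_def, MeasurableEquiv.symm_apply_apply]

theorem abs_l1Smul (φ : α ≃ᵐ α) (f : α → ℝ) (t : α) :
    |l1Smul μ φ f t| = l1Smul μ φ (fun s ↦ |f s|) t := by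
  simp only [l1Smul, abs_mul, ENNReal.abs_toReal]

theorem integral_abs_l1Smul [SigmaFinite μ] {φ : α ≃ᵐ α} (hφ : μ.map φ ≪ μ) (f : α → ℝ) :
    ∫ t, |l1Smul μ φ f t| ∂μ = ∫ t, |f t| ∂μ := by
  simp only [abs_l1Smul, integral_l1Smul hφ]

theorem support_l1Smul_subset (φ : α ≃ᵐ α) (f : α → ℝ) :
    Function.support (l1Smul μ φ f) ⊆ φ '' Function.support f := by
  intro t ht
  rw [φ.image_eq_preimage_symm]
  exact right_ne_zero_of_mul ht

end L1Action

theorem integral_abs_sub_of_disjoint_support {α : Type*} [MeasurableSpace α] {μ : Measure α}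
    {f g : α → ℝ} (hf : Integrable f μ) (hg : Integrable g μ)
    (hfg : Disjoint (Function.support f) (Function.support g)) :
    ∫ t, |f t - g t| ∂μ = ∫ t, |f t| ∂μ + ∫ t, |g t| ∂μ := by
  rw [← integral_add hf.abs hg.abs]
  congr 1 with t
  by_cases ht : f t = 0
  · simp [ht]
  · simp [Function.disjoint_support_iff.1 hfg ht]

instance : IsProbabilityMeasure μ01 :=
  inferInstanceAs (IsProbabilityMeasure (volume : Measure unitInterval))

theorem stmt_18_general (φ : unitInterval ≃ᵐ unitInterval)
    (habs : Measure.map φ μ01 ≪ μ01)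
    (hne : ¬ (⇑φ =ᵐ[μ01] id)) :
    ∃ f : unitInterval → ℝ, Integrable f μ01 ∧ (∫ t, |f t| ∂μ01) = 1 ∧
      1 < ∫ t, |((Measure.map φ μ01).rnDeriv μ01 t).toReal * f (φ.symm t) - f t| ∂μ01 := by
  obtain ⟨A, hA, hApos, hAφ⟩ := exists_pos_measure_disjoint_image φ.measurable hne
  have hA₀ : μ01.real A ≠ 0 := ENNReal.toReal_ne_zero.2 ⟨hApos.ne', measure_ne_top _ _⟩
  set f := A.indicator fun _ ↦ (μ01.real A)⁻¹
  have hf : Integrable f μ01 := (integrable_const _).indicator hA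
  have hf₁ : ∫ t, |f t| ∂μ01 = 1 := by
    simp only [f, ← Real.norm_eq_abs, norm_indicator_eq_indicator_norm]
    rw [integral_indicator_const _ hA, norm_inv, Real.norm_of_nonneg measureReal_nonneg,
      smul_eq_mul, mul_inv_cancel₀ hA₀]
  have hdisj : Disjoint (Function.support (l1Smul μ01 φ f)) (Function.support f) :=
    (hAφ.mono (Set.support_indicator_subset)
      ((support_l1Smul_subset φ f).trans (Set.image_mono Set.support_indicator_subset))).symm
  refine ⟨f, hf, hf₁, ?_⟩
  change 1 < ∫ t, |l1Smul μ01 φ f t - f t| ∂μ01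
  rw [integral_abs_sub_of_disjoint_support ((integrable_l1Smul_iff habs).2 hf) hf hdisj,
    integral_abs_l1Smul habs, hf₁]
  norm_num

/-- If `φ ∈ Aut*(μ)` is a measure-class-preserving transformation of Lebesgue measure
on `[0,1]` which is not a.e. the identity, then some `f` in the unit sphere of `L¹(μ)`
is moved by more than `1` by the action `φ·₁f = (d(φ_*μ)/dμ)·(f ∘ φ⁻¹)`; hence the
bi-invariant uniform distance on `Aut*(μ)` is discrete. -/
theorem stmt_18 (φ : unitInterval ≃ᵐ unitInterval)
    (habs : Measure.map φ μ01 ≪ μ01) (habs' : μ01 ≪ Measure.map φ μ01)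
    (hne : ¬ (⇑φ =ᵐ[μ01] id)) :
    ∃ f : unitInterval → ℝ, Integrable f μ01 ∧ (∫ t, |f t| ∂μ01) = 1 ∧
      1 < ∫ t, |((Measure.map φ μ01).rnDeriv μ01 t).toReal * f (φ.symm t) - f t| ∂μ01 :=
  stmt_18_general φ habs hne
end

section
/- Let E be a separable real Banach space and let g : E → E be a surjective linear isometry with g ≠ id. Then there exist x ∈ E and a continuous linear functional λ ∈ E* with ‖x‖ = ‖λ‖ = 1 and λ(x) = 1 (λ norms x), but λ(g x) < 1 (λ does not norm g x). -/
/-!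
Suppose every norm-one functional norming a unit vector `y` also norms `g y`. Pick `v` with
`‖v - g v‖ = 1` and a functional `l` norming `x = v - g v`; then `l` norms every iterate `gᵏ x`.
These iterates telescope: `∑_{k < n} gᵏ x = v - gⁿ v`, so `n = l (v - gⁿ v) ≤ 2 ‖v‖` for all `n`,
which is absurd.
-/

open Finset

section

variable {E : Type*} [NormedAddCommGroup E] [NormedSpace ℝ E]

def Norms (l : E →L[ℝ] ℝ) (x : E) : Prop := ‖x‖ = 1 ∧ ‖l‖ = 1 ∧ l x = 1

theorem exists_norms {x : E} (hx : ‖x‖ = 1) : ∃ l, Norms l x := by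
  obtain ⟨l, hl, hlx⟩ := exists_dual_vector ℝ x (by simp [hx])
  exact ⟨l, hx, hl, by simp [hlx, hx]⟩

namespace LinearIsometry

variable (g : E →ₗᵢ[ℝ] E)

theorem norms_apply_of_one_le {l : E →L[ℝ] ℝ} {x : E} (h : Norms l x) (h1 : 1 ≤ l (g x)) :
    Norms l (g x) := by
  obtain ⟨hx, hl, -⟩ := h
  have hle : l (g x) ≤ 1 := by
    simpa [hl, hx] using (le_abs_self _).trans (l.le_opNorm (g x))
  exact ⟨by rw [g.norm_map, hx], hl, le_antisymm hle h1⟩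

theorem norms_pow_apply {l : E →L[ℝ] ℝ} {x : E} (hg : ∀ y, Norms l y → 1 ≤ l (g y))
    (h : Norms l x) (n : ℕ) : Norms l ((g ^ n) x) := by
  induction n with
  | zero => simpa using h
  | succ n ih =>
    rw [pow_succ', coe_mul, Function.comp_apply]
    exact g.norms_apply_of_one_le ih (hg _ ih)

theorem sum_range_pow_apply_sub (v : E) (n : ℕ) :
    ∑ k ∈ range n, (g ^ k) (v - g v) = v - (g ^ n) v := by
  have hstep : ∀ k, (g ^ k) (v - g v) = (g ^ k) v - (g ^ (k + 1)) v := fun k ↦ by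
    rw [map_sub, pow_succ, coe_mul, Function.comp_apply]
  simp only [hstep, sum_range_sub', pow_zero, coe_one, id_eq]

theorem norm_sub_pow_apply_le (v : E) (n : ℕ) : ‖v - (g ^ n) v‖ ≤ 2 * ‖v‖ := by
  calc ‖v - (g ^ n) v‖ ≤ ‖v‖ + ‖(g ^ n) v‖ := norm_sub_le _ _
    _ = 2 * ‖v‖ := by rw [(g ^ n).norm_map]; ring

theorem nonpos_of_forall_apply_pow_apply_sub_eq {l : E →L[ℝ] ℝ} (hl : ‖l‖ ≤ 1) (v : E) {c : ℝ}
    (h : ∀ k, l ((g ^ k) (v - g v)) = c) : c ≤ 0 := by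
  have hbound : ∀ n : ℕ, n * c ≤ 2 * ‖v‖ := fun n ↦
    calc n * c = l (v - (g ^ n) v) := by
          rw [← g.sum_range_pow_apply_sub, map_sum, sum_congr rfl fun k _ ↦ h k, sum_const,
            card_range, nsmul_eq_mul]
      _ ≤ ‖l‖ * ‖v - (g ^ n) v‖ := (le_abs_self _).trans (l.le_opNorm _)
      _ ≤ 1 * (2 * ‖v‖) := by gcongr; exact g.norm_sub_pow_apply_le v n
      _ = 2 * ‖v‖ := one_mul _
  by_contra! hc
  obtain ⟨n, hn⟩ := exists_nat_gt (2 * ‖v‖ / c)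
  linarith [(div_lt_iff₀ hc).mp hn, hbound n]

end LinearIsometry

theorem exists_norm_sub_apply_eq_one {g : E →ₗ[ℝ] E} (hg : ⇑g ≠ id) : ∃ v, ‖v - g v‖ = 1 := by
  obtain ⟨u, hu⟩ := Function.ne_iff.mp hg
  have hδ : ‖u - g u‖ ≠ 0 := norm_ne_zero_iff.mpr (sub_ne_zero.mpr hu.symm)
  refine ⟨‖u - g u‖⁻¹ • u, ?_⟩
  rw [map_smul, ← smul_sub, norm_smul, norm_inv, norm_norm, inv_mul_cancel₀ hδ]

end

theorem stmt_19_general (E : Type*) [NormedAddCommGroup E] [NormedSpace ℝ E]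
    (g : E ≃ₗᵢ[ℝ] E) (hg : ⇑g ≠ id) :
    ∃ (x : E) (l : E →L[ℝ] ℝ), ‖x‖ = 1 ∧ ‖l‖ = 1 ∧ l x = 1 ∧ l (g x) < 1 := by
  by_contra! hnorms
  obtain ⟨v, hv⟩ := exists_norm_sub_apply_eq_one (g := g.toLinearEquiv.toLinearMap) hg
  obtain ⟨l, hl⟩ := exists_norms hv
  have hiter : ∀ k, l ((g.toLinearIsometry ^ k) (v - g v)) = 1 := fun k ↦
    (g.toLinearIsometry.norms_pow_apply (fun y hy ↦ hnorms y l hy.1 hy.2.1 hy.2.2) hl k).2.2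
  exact one_pos.not_ge
    (g.toLinearIsometry.nonpos_of_forall_apply_pow_apply_sub_eq hl.2.1.le v hiter)

/-- If `g` is a surjective linear isometry of a separable real Banach space, other than
the identity, then some norm-one functional `λ` norms some unit vector `x` (`λ x = 1`)
but does not norm `g x` (`λ (g x) < 1`). -/
theorem stmt_19 (E : Type*) [NormedAddCommGroup E] [NormedSpace ℝ E] [CompleteSpace E]
    [TopologicalSpace.SeparableSpace E]
    (g : E ≃ₗᵢ[ℝ] E) (hg : ⇑g ≠ id) :
    ∃ (x : E) (l : E →L[ℝ] ℝ), ‖x‖ = 1 ∧ ‖l‖ = 1 ∧ l x = 1 ∧ l (g x) < 1 :=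
  stmt_19_general E g hg
end
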